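/- If only triangle-triangle correspondences are allowed and the face adjacency graph of X is connected, then the number of feasible solutions of the ILP is at most the number of faces of Y times the number of cyclic orientations (3), hence the ILP can be solved by enumerating at most 3·|F_Y| candidate solutions. -/
import Mathlib


/-- A closed oriented combinatorial (triangulated) surface. -/
structure Surf (E F : Type*) where
  face : E → F
  rev : E → E
  next : E → E
  rev_rev : ∀ e, rev (rev e) = e
  next_face : ∀ e, face (next e) = face e
  next_next_next : ∀ e, next (next (next e)) = e
  face_eq : ∀ e e', face e = face e' → e' = e ∨ e' = next e ∨ e' = next (next e)
  face_surj : ∀ f, ∃ e, face e = f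

/-- Face adjacency: two faces sharing a directed edge and its reverse. -/
def Surf.adj {E F : Type*} (X : Surf E F) (f f' : F) : Prop :=
  ∃ e, X.face e = f ∧ X.face (X.rev e) = f'

/-- One-step relation on directed edges: go to next edge of the face or to the reverse. -/
def Surf.step {E F : Type*} (X : Surf E F) (e e' : E) : Prop :=
  e' = X.next e ∨ e' = X.rev e

lemma Surf.reach_of_same_face {E F : Type*} (X : Surf E F) {e e' : E}
    (h : X.face e = X.face e') : Relation.ReflTransGen X.step e e' := by
  rcases X.face_eq e e' h with h1 | h1 | h1
  · exact h1 ▸ Relation.ReflTransGen.refl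
  · exact h1 ▸ Relation.ReflTransGen.single (Or.inl rfl)
  · exact h1 ▸ Relation.ReflTransGen.trans
      (Relation.ReflTransGen.single (Or.inl rfl))
      (Relation.ReflTransGen.single (Or.inl rfl))

lemma Surf.reach_of_adj_rtg {E F : Type*} (X : Surf E F) {f f' : F}
    (h : Relation.ReflTransGen X.adj f f') :
    ∀ e e', X.face e = f → X.face e' = f' → Relation.ReflTransGen X.step e e' := by
  induction h with
  | refl => intro e e' he he'; exact X.reach_of_same_face (he.trans he'.symm)
  | tail _ a ih =>
      intro e e' he he'
      obtain ⟨d, hd1, hd2⟩ := a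
      refine (ih e d he hd1).trans ?_
      exact Relation.ReflTransGen.head (Or.inr rfl) (X.reach_of_same_face (hd2.trans he'.symm))

/-- If only triangle-triangle correspondences are allowed and the face adjacency graph
of X is connected, there are at most 3·|F_Y| feasible solutions (geometrically
consistent matchings), since |E_Y| = 3·|F_Y| cyclically oriented candidate images
of a fixed face determine everything. -/
theorem triangle_triangle_enumeration_bound
    {EX FX EY FY : Type*} [Fintype FY] [Fintype EY] [Nonempty FY]
    (X : Surf EX FX) (Y : Surf EY FY)
    (hconn : ∀ f f' : FX, Relation.ReflTransGen X.adj f f')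
    (hcard : Fintype.card EY = 3 * Fintype.card FY) :
    Set.ncard {p : (FX → FY) × (EX → EY) |
        (∀ e, Y.face (p.2 e) = p.1 (X.face e)) ∧
        (∀ e, p.2 (X.rev e) = Y.rev (p.2 e)) ∧
        (∀ e, p.2 (X.next e) = Y.next (p.2 e))}
      ≤ 3 * Fintype.card FY := by
  set S : Set ((FX → FY) × (EX → EY)) := {p |
        (∀ e, Y.face (p.2 e) = p.1 (X.face e)) ∧
        (∀ e, p.2 (X.rev e) = Y.rev (p.2 e)) ∧
        (∀ e, p.2 (X.next e) = Y.next (p.2 e))} with hS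
  rcases isEmpty_or_nonempty EX with hEX | hEX
  · -- no edges in X, hence no faces in X, so at most one feasible solution
    have hFX : IsEmpty FX := by
      by_contra h
      rw [not_isEmpty_iff] at h
      obtain ⟨f⟩ := h
      obtain ⟨e, _⟩ := X.face_surj f
      exact hEX.false e
    have hsub : S.Subsingleton := by
      intro p _ q _
      have h1 : p.1 = q.1 := Subsingleton.elim _ _
      have h2 : p.2 = q.2 := Subsingleton.elim _ _
      exact Prod.ext h1 h2
    have hle1 : S.ncard ≤ 1 := by
      rcases hsub.eq_empty_or_singleton with h | ⟨a, h⟩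
      · simp [h]
      · simp [h]
    calc S.ncard ≤ 1 := hle1
      _ ≤ 3 * Fintype.card FY := by
          have : 0 < Fintype.card FY := Fintype.card_pos
          omega
  · obtain ⟨e0⟩ := hEX
    have hinj : Set.InjOn (fun p : (FX → FY) × (EX → EY) => p.2 e0) S := by
      intro p hp q hq h
      obtain ⟨hp1, hp2, hp3⟩ := hp
      obtain ⟨hq1, hq2, hq3⟩ := hq
      have h2 : p.2 = q.2 := by
        funext e
        have hr : Relation.ReflTransGen X.step e0 e :=
          X.reach_of_adj_rtg (hconn (X.face e0) (X.face e)) e0 e rfl rfl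
        induction hr with
        | refl => exact h
        | tail _ a ih =>
            rcases a with rfl | rfl
            · rw [hp3, hq3, ih]
            · rw [hp2, hq2, ih]
      have h1 : p.1 = q.1 := by
        funext f
        obtain ⟨e, rfl⟩ := X.face_surj f
        rw [← hp1, ← hq1, h2]
      exact Prod.ext h1 h2
    have : S.ncard ≤ Nat.card EY := by
      have hfin : S.Finite := Set.Finite.of_finite_image
        ((Set.finite_univ (α := EY)).subset (Set.subset_univ _)) hinj
      calc S.ncard = (↑S : Set _).ncard := rfl
        _ = ((fun p : (FX → FY) × (EX → EY) => p.2 e0) '' S).ncard :=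
            (Set.ncard_image_of_injOn hinj).symm
        _ ≤ Nat.card EY := by
            rw [← Set.ncard_univ]
            exact Set.ncard_le_ncard (Set.subset_univ _) Set.finite_univ
    rwa [Nat.card_eq_fintype_card, hcard] at this
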